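/- Let Φ = (φ_ij) ∈ H^∞(𝕋, M_{m×n}) be a matrix-valued function that is rational in the sense that θ H^2(𝕋, ℂ^m) ⊆ ker H_{Φ*} for some finite Blaschke product θ. Then each entry can be written φ_ij = θ · conj(a_ij) with a_ij ∈ H^∞(𝕋); in particular each entry φ_ij is a rational function (the boundary value of a rational function of z). -/

import Mathlib

open MeasureTheory Complex

noncomputable section

/-- Normalized arc-length (Haar) measure on the unit circle `𝕋`, realized as a
measure on `ℂ` supported on the unit circle. -/
def mT : Measure ℂ :=
  Measure.map (fun t : ℝ => Complex.exp (t * Complex.I))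
    ((ENNReal.ofReal (2 * Real.pi))⁻¹ • volume.restrict (Set.Ioc 0 (2 * Real.pi)))

variable {D E E' : Type*}
  [NormedAddCommGroup D] [InnerProductSpace ℂ D] [CompleteSpace D]
  [NormedAddCommGroup E] [InnerProductSpace ℂ E] [CompleteSpace E]
  [NormedAddCommGroup E'] [InnerProductSpace ℂ E'] [CompleteSpace E']

/-- The `n`-th Fourier coefficient `Φ̂(n)x = ∫_𝕋 z̄ⁿ Φ(z)x dm(z)` of an
operator-valued function, applied to the vector `x`. -/
def fc (Φ : ℂ → D →L[ℂ] E) (n : ℤ) (x : D) : E :=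
  ∫ z, ((starRingEnd ℂ) z) ^ n • (Φ z x) ∂mT

/-- Membership in `H^∞(𝕋, B(D,E))`: SOT-measurable, essentially bounded in operator
norm, with vanishing negative Fourier coefficients. -/
structure MemHinf (Φ : ℂ → D →L[ℂ] E) : Prop where
  meas : ∀ x : D, AEStronglyMeasurable (fun z => Φ z x) mT
  bdd : ∃ r : ℝ, ∀ᵐ z ∂mT, ‖Φ z‖ ≤ r
  neg : ∀ n : ℤ, n < 0 → ∀ x : D, fc Φ n x = 0

/-- An inner function: `Φ ∈ H^∞` with `Φ(z)*Φ(z) = I` a.e. -/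
def IsInnerFn (Φ : ℂ → D →L[ℂ] E) : Prop :=
  MemHinf Φ ∧ ∀ᵐ z ∂mT,
    (ContinuousLinearMap.adjoint (Φ z)).comp (Φ z) = ContinuousLinearMap.id ℂ D

/-- A two-sided inner function: inner and `Φ(z)Φ(z)* = I` a.e. -/
def IsTwoSidedInner (Φ : ℂ → D →L[ℂ] E) : Prop :=
  IsInnerFn Φ ∧ ∀ᵐ z ∂mT,
    (Φ z).comp (ContinuousLinearMap.adjoint (Φ z)) = ContinuousLinearMap.id ℂ E

/-- `Θ` is a left inner divisor of `Φ`: `Θ` is inner and `Φ = Θ A` for some `A ∈ H^∞`. -/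
def IsLeftInnerDiv (Θ : ℂ → E' →L[ℂ] E) (Φ : ℂ → D →L[ℂ] E) : Prop :=
  IsInnerFn Θ ∧ ∃ A : ℂ → D →L[ℂ] E', MemHinf A ∧ ∀ᵐ z ∂mT, Φ z = (Θ z).comp (A z)

/-- `Ω` is a right inner divisor of `Φ`: `Ω` is inner and `Φ = B Ω` for some `B ∈ H^∞`. -/
def IsRightInnerDiv (Ω : ℂ → D →L[ℂ] E') (Φ : ℂ → D →L[ℂ] E) : Prop :=
  IsInnerFn Ω ∧ ∃ B : ℂ → E' →L[ℂ] E, MemHinf B ∧ ∀ᵐ z ∂mT, Φ z = (B z).comp (Ω z)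

/-- `Δ` is an inner divisor of `Φ`: both a left and a right inner divisor. -/
def IsInnerDiv (Δ Φ : ℂ → E →L[ℂ] E) : Prop :=
  IsLeftInnerDiv Δ Φ ∧ IsRightInnerDiv Δ Φ

/-- A unitary operator between Hilbert spaces. -/
def IsUnitaryOp (U : D →L[ℂ] E) : Prop :=
  (ContinuousLinearMap.adjoint U).comp U = ContinuousLinearMap.id ℂ D ∧
    U.comp (ContinuousLinearMap.adjoint U) = ContinuousLinearMap.id ℂ E

/-- An orthogonal projection: idempotent and self-adjoint. -/
def IsOrthoProj (P : E →L[ℂ] E) : Prop :=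
  P.comp P = P ∧ ContinuousLinearMap.adjoint P = P

/-- A partial isometry: `T T* T = T`. -/
def IsPartialIsom (T : D →L[ℂ] E) : Prop :=
  (T.comp (ContinuousLinearMap.adjoint T)).comp T = T

/-- The Blaschke factor `b_α(z) = (z - α)/(1 - ᾱ z)`. -/
def blaschke (α z : ℂ) : ℂ := (z - α) / (1 - (starRingEnd ℂ) α * z)

/-- The Poisson integral of `Φ ∈ H^∞` at `ζ ∈ 𝔻`, applied to the vector `x`:
`P[Φ](ζ)x = Σ_{n ≥ 0} Φ̂(n)x ζⁿ`. -/
def poissonFn (Φ : ℂ → D →L[ℂ] E) (ζ : ℂ) (x : D) : E :=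
  ∑' n : ℕ, ζ ^ n • fc Φ (n : ℤ) x

/-- The `n`-th Fourier coefficient of a vector-valued function. -/
def vfc (f : ℂ → E) (n : ℤ) : E :=
  ∫ z, ((starRingEnd ℂ) z) ^ n • f z ∂mT

/-- Membership in `H²(𝕋, E)`: square Bochner-integrable with vanishing
negative Fourier coefficients. -/
def MemH2 (f : ℂ → E) : Prop :=
  MemLp f 2 mT ∧ ∀ n : ℤ, n < 0 → vfc f n = 0

/-- A finite Blaschke product `θ = ∏ b_{αₙ}` with all `αₙ ∈ 𝔻`. -/
def IsFiniteBlaschkeProd (θ : ℂ → ℂ) : Prop :=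
  ∃ (M : ℕ) (α : Fin M → ℂ), (∀ i, ‖α i‖ < 1) ∧ ∀ z, θ z = ∏ i, blaschke (α i) z

/-- `Φ ∈ H^∞(𝕋, B(D,E))` is rational: `θ H²(𝕋,E) ⊆ ker H_{Φ*}` for some finite
Blaschke product `θ`, where `ker H_{Φ*} = {f ∈ H²(𝕋,E) : Φ*f ∈ H²(𝕋,D)}`. -/
def IsRationalFn (Φ : ℂ → D →L[ℂ] E) : Prop :=
  ∃ θ : ℂ → ℂ, IsFiniteBlaschkeProd θ ∧
    ∀ f : ℂ → E, MemH2 f →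
      MemH2 (fun z => θ z • f z) ∧
      MemH2 (fun z => θ z • (ContinuousLinearMap.adjoint (Φ z)) (f z))

/-- A finite Blaschke-Potapov product
`Δ = V ∏ₘ (b_{αₘ} Pₘ + (I - Pₘ))` with `V` a constant unitary, `αₘ ∈ 𝔻` and
`Pₘ` orthogonal projections. -/
def IsBPProduct (Δ : ℂ → E →L[ℂ] E) : Prop :=
  ∃ (M : ℕ) (V : E →L[ℂ] E) (α : Fin M → ℂ) (P : Fin M → E →L[ℂ] E),
    IsUnitaryOp V ∧ (∀ i, ‖α i‖ < 1) ∧ (∀ i, IsOrthoProj (P i)) ∧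
    ∀ᵐ z ∂mT, Δ z = V * (List.ofFn fun i => blaschke (α i) z • P i + (1 - P i)).prod

/-- `Φ` and `Ψ` (with values in operators into the same space `E`) are left coprime:
every common left inner divisor is a constant unitary. -/
def LeftCoprime {D₁ D₂ : Type*}
    [NormedAddCommGroup D₁] [InnerProductSpace ℂ D₁] [CompleteSpace D₁]
    [NormedAddCommGroup D₂] [InnerProductSpace ℂ D₂] [CompleteSpace D₂]
    (Φ : ℂ → D₁ →L[ℂ] E) (Ψ : ℂ → D₂ →L[ℂ] E) : Prop :=
  ∀ (F : Type) (_ : NormedAddCommGroup F) (_ : InnerProductSpace ℂ F) (_ : CompleteSpace F)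
    (Θ : ℂ → F →L[ℂ] E), IsLeftInnerDiv Θ Φ → IsLeftInnerDiv Θ Ψ →
      ∃ U : F →L[ℂ] E, IsUnitaryOp U ∧ ∀ᵐ z ∂mT, Θ z = U


/-- Membership in scalar `H^∞(𝕋)`: measurable, essentially bounded, vanishing negative
Fourier coefficients. -/
def MemHinfScalar (a : ℂ → ℂ) : Prop :=
  AEStronglyMeasurable a mT ∧ (∃ r : ℝ, ∀ᵐ z ∂mT, ‖a z‖ ≤ r) ∧
    ∀ n : ℤ, n < 0 → (∫ z, ((starRingEnd ℂ) z) ^ n * a z ∂mT) = 0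

/-! Since `θ` is unimodular on `𝕋`, applying the hypothesis to the constant function `eᵢ` shows
that `a := θ · conj φᵢⱼ = ⟪eⱼ, θ Φ* eᵢ⟫` lies in `H^∞`, and `φᵢⱼ = θ · conj a`. Writing `θ = P / Q`
with polynomials `P, Q` (`Q` zero-free on `𝕋`), the function `Q φᵢⱼ = P · conj a` has Fourier
coefficients vanishing below `0` (left side) and above `deg P` (right side), so it is a polynomial
`p` and `φᵢⱼ = p / Q`. Fourier coefficients on `𝕋` are those on `AddCircle (2π)`, where uniqueness
comes from the Fourier Hilbert basis of `L²`. -/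
open Polynomial ComplexConjugate AddCircle
open scoped InnerProductSpace Real

local instance : Fact (0 < 2 * π) := ⟨Real.two_pi_pos⟩

def circleParam (x : AddCircle (2 * π)) : ℂ := x.toCircle

lemma circleParam_coe (t : ℝ) : circleParam t = exp (t * I) := by
  simp [circleParam, toCircle_apply_mk, Real.two_pi_pos.ne']

lemma measurableEmbedding_circleParam : MeasurableEmbedding circleParam :=
  (continuous_subtype_val.comp continuous_toCircle |>.isClosedEmbedding
    (Subtype.val_injective.comp (injective_toCircle Real.two_pi_pos.ne'))).measurableEmbedding

lemma mT_eq_map : mT = haarAddCircle.map circleParam := by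
  have hmk := AddCircle.measurePreserving_mk (2 * π) 0
  rw [zero_add] at hmk
  have hexp : (fun t : ℝ => exp (t * I)) = circleParam ∘ ((↑) : ℝ → AddCircle (2 * π)) := by
    funext t; simp [circleParam_coe]
  rw [mT, hexp, ← Measure.map_map measurableEmbedding_circleParam.measurable hmk.measurable,
    Measure.map_smul, hmk.map_eq, volume_eq_smul_haarAddCircle, smul_smul,
    ENNReal.inv_mul_cancel (by simp [Real.pi_pos]) ENNReal.ofReal_ne_top, one_smul]

instance : IsProbabilityMeasure mT := by
  rw [mT_eq_map]
  exact Measure.isProbabilityMeasure_map measurableEmbedding_circleParam.measurable.aemeasurable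

lemma ae_norm_eq_one : ∀ᵐ z ∂mT, ‖z‖ = 1 := by
  rw [mT_eq_map, measurableEmbedding_circleParam.ae_map_iff]
  exact ae_of_all _ fun x => Circle.norm_coe _

lemma memLp_top_of_continuous {V : Type*} [NormedAddCommGroup V] {f : ℂ → V}
    (hf : Continuous f) : MemLp f ⊤ mT := by
  obtain ⟨C, hC⟩ := (isCompact_sphere (0 : ℂ) 1).exists_bound_of_continuousOn hf.continuousOn
  refine memLp_top_of_bound hf.aestronglyMeasurable C ?_
  filter_upwards [ae_norm_eq_one] with z hz
  exact hC z (mem_sphere_zero_iff_norm.2 hz)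

lemma conj_zpow_mul_pow_of_norm_eq_one {z : ℂ} (hz : ‖z‖ = 1) (n : ℤ) (k : ℕ) :
    conj z ^ n * z ^ k = conj z ^ (n - k) := by
  have hz0 : z ≠ 0 := norm_ne_zero_iff.1 (by simp [hz])
  rw [← RCLike.inv_eq_conj hz, zpow_sub₀ (inv_ne_zero hz0), zpow_natCast, inv_pow,
    div_inv_eq_mul]

lemma integrable_conj_zpow_smul {V : Type*} [NormedAddCommGroup V] [NormedSpace ℂ V]
    {g : ℂ → V} (hg : Integrable g mT) (n : ℤ) :
    Integrable (fun z => conj z ^ n • g z) mT := by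
  refine hg.bdd_smul 1 (continuous_conj.measurable.pow_const n).aestronglyMeasurable ?_
  filter_upwards [ae_norm_eq_one] with z hz
  simp [hz]

section FourierCoefficients

variable {V : Type*} [NormedAddCommGroup V] [InnerProductSpace ℂ V]

lemma vfc_eq_fourierCoeff (g : ℂ → V) (n : ℤ) :
    vfc g n = fourierCoeff (g ∘ circleParam) n := by
  rw [vfc, mT_eq_map, measurableEmbedding_circleParam.integral_map, fourierCoeff]
  congr 1
  funext x
  rw [fourier_neg, fourier_apply, toCircle_zsmul, Circle.coe_zpow, map_zpow₀]
  rfl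

lemma vfc_congr_ae {f g : ℂ → V} (hfg : f =ᵐ[mT] g) (n : ℤ) : vfc f n = vfc g n :=
  integral_congr_ae (hfg.mono fun z hz => by simp only [hz])

lemma vfc_inner [CompleteSpace V] {g : ℂ → V} (hg : Integrable g mT) (y : V) (n : ℤ) :
    vfc (fun z => ⟪y, g z⟫_ℂ) n = ⟪y, vfc g n⟫_ℂ := by
  simp only [vfc, smul_eq_mul, ← inner_smul_right]
  exact integral_inner (integrable_conj_zpow_smul hg n) y

lemma vfc_conj (f : ℂ → ℂ) (n : ℤ) : vfc (fun z => conj (f z)) n = conj (vfc f (-n)) := by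
  rw [vfc, vfc, ← integral_conj]
  refine integral_congr_ae ?_
  filter_upwards [ae_norm_eq_one] with z hz
  simp [← RCLike.inv_eq_conj hz]

lemma vfc_eval_mul {f : ℂ → ℂ} (hf : Integrable f mT) (q : ℂ[X]) (n : ℤ) :
    vfc (fun z => q.eval z * f z) n =
      ∑ k ∈ Finset.range (q.natDegree + 1), q.coeff k * vfc f (n - k) := by
  have hsum : (fun z => conj z ^ n • (q.eval z * f z)) =ᵐ[mT]
      fun z => ∑ k ∈ Finset.range (q.natDegree + 1), q.coeff k * (conj z ^ (n - k) • f z) := by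
    filter_upwards [ae_norm_eq_one] with z hz
    simp only [eval_eq_sum_range, Finset.sum_mul, Finset.mul_sum, smul_eq_mul,
      ← conj_zpow_mul_pow_of_norm_eq_one hz]
    exact Finset.sum_congr rfl fun k _ => by ring
  rw [vfc, integral_congr_ae hsum, integral_finsetSum _ fun k _ =>
    (integrable_conj_zpow_smul hf _).const_mul _]
  simp only [integral_const_mul, vfc]

lemma ae_eq_of_vfc_eq {g h : ℂ → ℂ} (hg : MemLp g 2 mT) (hh : MemLp h 2 mT)
    (hgh : ∀ n, vfc g n = vfc h n) : g =ᵐ[mT] h := by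
  rw [mT_eq_map, measurableEmbedding_circleParam.memLp_map_measure_iff] at hg hh
  suffices hg.toLp = hh.toLp by
    rw [mT_eq_map, Filter.EventuallyEq, measurableEmbedding_circleParam.ae_map_iff]
    exact (MemLp.toLp_eq_toLp_iff hg hh).1 this
  refine fourierBasis.repr.injective (lp.ext (funext fun n => ?_))
  simp only [fourierBasis_repr, fourierCoeff_congr_ae hg.coeFn_toLp,
    fourierCoeff_congr_ae hh.coeFn_toLp, ← vfc_eq_fourierCoeff, hgh]

lemma vfc_eval (p : ℂ[X]) (n : ℤ) :
    vfc (fun z => p.eval z) n = if 0 ≤ n then p.coeff n.natAbs else 0 := by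
  rw [vfc_eq_fourierCoeff, ← fourierCoeff_toAddCircle]
  congr 1
  funext x
  simp [circleParam, toAddCircle]

theorem exists_polynomial_ae_eq_of_vfc_eq_zero {h : ℂ → ℂ} (hh : MemLp h 2 mT) (N : ℕ)
    (hneg : ∀ n < 0, vfc h n = 0) (hbig : ∀ n : ℤ, N < n → vfc h n = 0) :
    ∃ p : ℂ[X], h =ᵐ[mT] fun z => p.eval z := by
  refine ⟨∑ k ∈ Finset.range (N + 1), monomial k (vfc h k), ae_eq_of_vfc_eq hh
    ((memLp_top_of_continuous (Polynomial.continuous _)).mono_exponent le_top) fun n => ?_⟩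
  rw [vfc_eval]
  rcases lt_or_ge n 0 with hn | hn
  · simp [hneg n hn, hn.not_ge]
  obtain ⟨k, rfl⟩ := Int.eq_ofNat_of_zero_le hn
  by_cases hk : k ≤ N
  · simp [coeff_monomial, Nat.lt_succ_iff.2 hk]
  · simp [coeff_monomial, hbig k (by omega)]

lemma memH2_const [CompleteSpace V] (y : V) : MemH2 fun _ : ℂ => y := by
  refine ⟨memLp_const y, fun n hn => ?_⟩
  have h1 := vfc_eval 1 n
  simp only [eval_one, if_neg hn.not_ge, vfc, smul_eq_mul, mul_one] at h1
  rw [vfc, integral_smul_const, h1, zero_smul]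

lemma memHinfScalar_inner_of_bound [CompleteSpace V] {g : ℂ → V}
    (hm : AEStronglyMeasurable g mT) {r : ℝ} (hr : ∀ᵐ z ∂mT, ‖g z‖ ≤ r)
    (hneg : ∀ n < 0, vfc g n = 0) (y : V) :
    MemHinfScalar fun z => ⟪y, g z⟫_ℂ := by
  refine ⟨(innerSL ℂ y).continuous.comp_aestronglyMeasurable hm, ⟨‖y‖ * r, ?_⟩, fun n hn => ?_⟩
  · filter_upwards [hr] with z hz
    exact (norm_inner_le_norm y (g z)).trans (by gcongr)
  · have h := vfc_inner (Integrable.of_bound hm r hr) y n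
    rwa [hneg n hn, inner_zero_right] at h

end FourierCoefficients

lemma blaschke_eq_inv_canonicalFactor (α z : ℂ) : blaschke α z = (canonicalFactor 1 α z)⁻¹ := by
  simp [blaschke, canonicalFactor_apply]

lemma norm_blaschke_eq_one {α z : ℂ} (hα : ‖α‖ < 1) (hz : ‖z‖ = 1) : ‖blaschke α z‖ = 1 := by
  rw [blaschke_eq_inv_canonicalFactor, norm_inv,
    norm_canonicalFactor_eval_circle_eq_one (by simpa) (by simpa), inv_one]

lemma one_sub_conj_mul_ne_zero {α z : ℂ} (hα : ‖α‖ < 1) (hz : ‖z‖ = 1) : 1 - conj α * z ≠ 0 := by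
  intro h
  have := congrArg norm (sub_eq_zero.1 h)
  simp [hz] at this
  linarith

lemma IsFiniteBlaschkeProd.norm_eq_one {θ : ℂ → ℂ} (hθ : IsFiniteBlaschkeProd θ) {z : ℂ}
    (hz : ‖z‖ = 1) : ‖θ z‖ = 1 := by
  obtain ⟨M, α, hα, hθ⟩ := hθ
  rw [hθ, norm_prod]
  exact Finset.prod_eq_one fun i _ => norm_blaschke_eq_one (hα i) hz

lemma IsFiniteBlaschkeProd.exists_polynomial_mul_eq {θ : ℂ → ℂ} (hθ : IsFiniteBlaschkeProd θ) :
    ∃ P Q : ℂ[X], ∀ z : ℂ, ‖z‖ = 1 → Q.eval z ≠ 0 ∧ θ z * Q.eval z = P.eval z := by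
  obtain ⟨M, α, hα, hθ⟩ := hθ
  refine ⟨∏ i, (X - C (α i)), ∏ i, (1 - C (conj (α i)) * X), fun z hz => ?_⟩
  have hden : ∀ i, 1 - conj (α i) * z ≠ 0 := fun i => one_sub_conj_mul_ne_zero (hα i) hz
  simp only [eval_prod, eval_sub, eval_mul, eval_C, eval_X, eval_one, hθ,
    ← Finset.prod_mul_distrib]
  exact ⟨Finset.prod_ne_zero_iff.2 fun i _ => hden i,
    Finset.prod_congr rfl fun i _ => div_mul_cancel₀ _ (hden i)⟩

lemma MemHinfScalar.memLp_top {a : ℂ → ℂ} (ha : MemHinfScalar a) : MemLp a ⊤ mT := by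
  obtain ⟨hm, ⟨r, hr⟩, -⟩ := ha
  exact memLp_top_of_bound hm r hr

lemma MemHinfScalar.vfc_eq_zero {a : ℂ → ℂ} (ha : MemHinfScalar a) {n : ℤ} (hn : n < 0) :
    vfc a n = 0 :=
  ha.2.2 n hn

theorem MemHinfScalar.exists_eq_div_of_ae_eq_mul_conj {φ a θ : ℂ → ℂ} (hφ : MemHinfScalar φ)
    (ha : MemHinfScalar a) (hθ : IsFiniteBlaschkeProd θ)
    (hφa : ∀ᵐ z ∂mT, φ z = θ z * conj (a z)) :
    ∃ p q : ℂ[X], q ≠ 0 ∧ ∀ᵐ z ∂mT, φ z = p.eval z / q.eval z := by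
  obtain ⟨P, Q, hPQ⟩ := hθ.exists_polynomial_mul_eq
  have hQφ : (fun z => Q.eval z * φ z) =ᵐ[mT] fun z => P.eval z * conj (a z) := by
    filter_upwards [hφa, ae_norm_eq_one] with z h hz
    rw [h, ← (hPQ z hz).2]
    ring
  have hmem : MemLp (fun z => Q.eval z * φ z) 2 mT :=
    (hφ.memLp_top.mono_exponent (p := 2) le_top).mul (r := 2)
      (memLp_top_of_continuous Q.continuous)
  have hneg : ∀ n < 0, vfc (fun z => Q.eval z * φ z) n = 0 := fun n hn => by
    rw [vfc_eval_mul (hφ.memLp_top.integrable le_top)]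
    exact Finset.sum_eq_zero fun k _ => by rw [hφ.vfc_eq_zero (by omega), mul_zero]
  have hbig : ∀ n : ℤ, P.natDegree < n → vfc (fun z => Q.eval z * φ z) n = 0 := fun n hn => by
    rw [vfc_congr_ae hQφ,
      vfc_eval_mul (f := fun z => conj (a z)) (ha.memLp_top.star.integrable le_top)]
    refine Finset.sum_eq_zero fun k hk => ?_
    rw [vfc_conj, ha.vfc_eq_zero (by simp at hk; omega), map_zero, mul_zero]
  obtain ⟨p, hp⟩ := exists_polynomial_ae_eq_of_vfc_eq_zero hmem P.natDegree hneg hbig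
  refine ⟨p, Q, fun hQ => (hPQ 1 norm_one).1 (by simp [hQ]), ?_⟩
  filter_upwards [hp, ae_norm_eq_one] with z hz h1
  rw [eq_div_iff (hPQ z h1).1, mul_comm, hz]

omit [CompleteSpace D] in
lemma MemHinf.memHinfScalar_inner {Φ : ℂ → D →L[ℂ] E} (hΦ : MemHinf Φ) (x : D) (y : E) :
    MemHinfScalar fun z => ⟪y, Φ z x⟫_ℂ := by
  obtain ⟨r, hr⟩ := hΦ.bdd
  refine memHinfScalar_inner_of_bound (hΦ.meas x) (r := r * ‖x‖) ?_ (fun n hn => hΦ.neg n hn x) y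
  filter_upwards [hr] with z hz
  exact (Φ z).le_opNorm x |>.trans (by gcongr)

lemma exists_inner_eq_mul_conj_of_memH2 {Φ : ℂ → D →L[ℂ] E} {r : ℝ}
    (hr : ∀ᵐ z ∂mT, ‖Φ z‖ ≤ r) {θ : ℂ → ℂ} (hθ : ∀ᵐ z ∂mT, ‖θ z‖ = 1) (x : D) (y : E)
    (hg : MemH2 fun z => θ z • ContinuousLinearMap.adjoint (Φ z) y) :
    ∃ a : ℂ → ℂ, MemHinfScalar a ∧ ∀ᵐ z ∂mT, ⟪y, Φ z x⟫_ℂ = θ z * conj (a z) := by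
  refine ⟨fun z => ⟪x, θ z • ContinuousLinearMap.adjoint (Φ z) y⟫_ℂ,
    memHinfScalar_inner_of_bound hg.1.aestronglyMeasurable (r := r * ‖y‖) ?_ hg.2 x, ?_⟩
  · filter_upwards [hr, hθ] with z hz h1
    rw [norm_smul, h1, one_mul]
    refine (ContinuousLinearMap.adjoint (Φ z)).le_opNorm y |>.trans ?_
    rw [LinearIsometryEquiv.norm_map]
    gcongr
  · filter_upwards [hθ] with z h1
    rw [inner_smul_right, ContinuousLinearMap.adjoint_inner_right, map_mul, inner_conj_symm,
      ← mul_assoc, RCLike.mul_conj, h1]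
    simp

/-- Let `Φ ∈ H^∞(𝕋, M_{m×n})` be matrix-valued and rational in the sense
that `θ H²(𝕋, ℂᵐ) ⊆ ker H_{Φ*}` for a finite Blaschke product `θ`. Then every entry can be
written `φ_ij = θ ⬝ conj(a_ij)` with `a_ij ∈ H^∞(𝕋)`; in particular each entry is a
rational function. -/
theorem entries_of_rational_matrix_function_are_rational (m n : ℕ)
    (Φ : ℂ → EuclideanSpace ℂ (Fin n) →L[ℂ] EuclideanSpace ℂ (Fin m))
    (hΦ : MemHinf Φ) (θ : ℂ → ℂ) (hθ : IsFiniteBlaschkeProd θ)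
    (hsub : ∀ f : ℂ → EuclideanSpace ℂ (Fin m), MemH2 f →
      MemH2 (fun z => θ z • f z) ∧
      MemH2 (fun z => θ z • (ContinuousLinearMap.adjoint (Φ z)) (f z))) :
    ∀ (i : Fin m) (j : Fin n),
      (∃ a : ℂ → ℂ, MemHinfScalar a ∧
        ∀ᵐ z ∂mT, Φ z (EuclideanSpace.single j 1) i = θ z * (starRingEnd ℂ) (a z)) ∧
      (∃ p q : Polynomial ℂ, q ≠ 0 ∧
        ∀ᵐ z ∂mT, Φ z (EuclideanSpace.single j 1) i = p.eval z / q.eval z) := by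
  intro i j
  have hentry : (fun z => Φ z (EuclideanSpace.single j 1) i) =
      fun z => ⟪EuclideanSpace.single i 1, Φ z (EuclideanSpace.single j 1)⟫_ℂ := by
    simp [EuclideanSpace.inner_single_left]
  have hθ1 : ∀ᵐ z ∂mT, ‖θ z‖ = 1 := ae_norm_eq_one.mono fun z hz => hθ.norm_eq_one hz
  obtain ⟨r, hr⟩ := hΦ.bdd
  obtain ⟨a, ha, hφa⟩ := exists_inner_eq_mul_conj_of_memH2 hr hθ1 (EuclideanSpace.single j 1)
    (EuclideanSpace.single i 1) (hsub _ (memH2_const _)).2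
  have hφ := hΦ.memHinfScalar_inner (EuclideanSpace.single j 1) (EuclideanSpace.single i 1)
  rw [← hentry] at hφ
  simp only [← congrFun hentry] at hφa
  exact ⟨⟨a, ha, hφa⟩, hφ.exists_eq_div_of_ae_eq_mul_conj ha hθ hφa⟩
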